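/- arXiv:1907.06030 — 2 statements merged into one kernel-verified Lean document; each statement's English description precedes it below -/
import Mathlib

section
/- If f is C² with f(0)=f'(0)=0 and u ∈ Y ∩ C²(ℝ), then lim_{h→0⁺} E_h(u) = (1/24) ∫_ℝ f''(u(x)) |u'(x)|² dx. -/
/-!
Write `⨍ₕ g (x) = (1/h) ∫_x^{x+h} g`. Sliding averages preserve integrals, so
`h² E_h(u) = ∫ (⨍ₕ (f ∘ u) - f (⨍ₕ u))`, an integral of Jensen gaps. To second order the gap at
`x` is `f''(u x) / 2` times the variance of `u` on `[x, x + h]`, which is `u'(x)² h² / 12`; this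
is made rigorous by Taylor-expanding `⨍ₕ (f ∘ u)`, `⨍ₕ u` and `f` through l'Hôpital's rule.
Uniformly, the gap is at most `sup |f''|` times the squared oscillation of `u` on `[x, x + h]`,
hence `O(h²)`, and it vanishes off a fixed compact set, so dominated convergence concludes.
-/

open MeasureTheory Set Filter Topology
open scoped NNReal

section SlidingIntegral

variable {g : ℝ → ℝ}

theorem intervalIntegral_add_eq_integral_comp_add (g : ℝ → ℝ) (x h : ℝ) :
    ∫ y in x..x + h, g y = ∫ t in (0 : ℝ)..h, g (t + x) := by
  rw [intervalIntegral.integral_comp_add_right, zero_add, add_comm]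

theorem continuous_intervalIntegral_add (hg : Continuous g) (h : ℝ) :
    Continuous fun x => ∫ y in x..x + h, g y := by
  simp_rw [intervalIntegral_add_eq_integral_comp_add]
  exact intervalIntegral.continuous_parametric_intervalIntegral_of_continuous' (by fun_prop) _ _

theorem MeasureTheory.Integrable.uncurry_comp_add (hg : Integrable g) (μ : Measure ℝ)
    [IsFiniteMeasure μ] : Integrable (Function.uncurry fun t x => g (t + x)) (μ.prod volume) :=
  (measurePreserving_prod_add μ volume).integrable_comp_of_integrable (hg.comp_snd μ)

theorem MeasureTheory.Integrable.intervalIntegral_add (hg : Integrable g) (h : ℝ) :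
    Integrable fun x => ∫ y in x..x + h, g y := by
  have : IsFiniteMeasure (volume.restrict (uIoc 0 h)) := isFiniteMeasure_restrict.2 (by simp)
  simp_rw [intervalIntegral_add_eq_integral_comp_add,
    intervalIntegral.intervalIntegral_eq_integral_uIoc]
  exact ((hg.uncurry_comp_add (volume.restrict (uIoc 0 h))).integral_prod_right).smul
    (if 0 ≤ h then (1 : ℝ) else -1)

theorem integral_intervalIntegral_add (hg : Integrable g) (h : ℝ) :
    ∫ x, ∫ y in x..x + h, g y = h * ∫ x, g x := by
  have : IsFiniteMeasure (volume.restrict (uIoc 0 h)) := isFiniteMeasure_restrict.2 (by simp)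
  simp_rw [intervalIntegral_add_eq_integral_comp_add]
  rw [← intervalIntegral_integral_swap (hg.uncurry_comp_add _)]
  simp [integral_add_left_eq_self]

end SlidingIntegral

section JensenGap

variable {φ : ℝ → ℝ} {s : Set ℝ} {C : ℝ}

theorem Convex.abs_sub_sub_deriv_mul_le (hs : Convex ℝ s) (hφ : Differentiable ℝ φ)
    (hφ' : Differentiable ℝ (deriv φ)) (hC : ∀ r ∈ s, |deriv (deriv φ) r| ≤ C)
    {t r : ℝ} (ht : t ∈ s) (hr : r ∈ s) :
    |φ r - φ t - deriv φ t * (r - t)| ≤ C * (r - t) ^ 2 := by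
  have hseg : uIcc t r ⊆ s := hs.segment_subset ht hr |>.trans' (segment_eq_uIcc t r).ge
  have hφ'_lip : ∀ y ∈ uIcc t r, |deriv φ y - deriv φ t| ≤ C * |r - t| := by
    intro y hy
    calc |deriv φ y - deriv φ t| ≤ C * |y - t| :=
          hs.norm_image_sub_le_of_norm_deriv_le (fun z _ => hφ' z) hC ht (hseg hy)
      _ ≤ C * |r - t| := mul_le_mul_of_nonneg_left (abs_sub_left_of_mem_uIcc hy)
          ((abs_nonneg _).trans (hC t ht))
  have hmvt := (convex_uIcc t r).norm_image_sub_le_of_norm_hasDerivWithin_le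
    (f := fun y => φ y - deriv φ t * y)
    (fun y _ => ((hφ y).hasDerivAt.sub ((hasDerivAt_id y).const_mul _)).hasDerivWithinAt)
    (fun y hy => by simpa using hφ'_lip y hy) left_mem_uIcc right_mem_uIcc
  rw [Real.norm_eq_abs, Real.norm_eq_abs] at hmvt
  calc |φ r - φ t - deriv φ t * (r - t)| ≤ C * |r - t| * |r - t| := by
        convert hmvt using 2; ring
    _ = C * (r - t) ^ 2 := by rw [mul_assoc, ← sq, sq_abs]

theorem abs_integral_comp_sub_comp_integral_le {α : Type*} [MeasurableSpace α] {μ : Measure α}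
    [IsProbabilityMeasure μ] {u : α → ℝ} {δ : ℝ} (hs : Convex ℝ s) (hsc : IsClosed s)
    (hφ : Differentiable ℝ φ) (hφ' : Differentiable ℝ (deriv φ))
    (hC : ∀ r ∈ s, |deriv (deriv φ) r| ≤ C) (hu : Integrable u μ)
    (hφu : Integrable (fun y => φ (u y)) μ) (hus : ∀ᵐ y ∂μ, u y ∈ s)
    (hδ : ∀ᵐ y ∂μ, ∀ᵐ z ∂μ, |u y - u z| ≤ δ) :
    |∫ y, φ (u y) ∂μ - φ (∫ y, u y ∂μ)| ≤ C * δ ^ 2 := by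
  set m := ∫ y, u y ∂μ
  have hm : m ∈ s := hs.integral_mem hsc hus hu
  have hdev : ∀ᵐ y ∂μ, |u y - m| ≤ δ := by
    filter_upwards [hδ] with y hy
    have : u y - m = ∫ z, (u y - u z) ∂μ := by
      rw [integral_sub (integrable_const _) hu, integral_const, probReal_univ, one_smul]
    simpa [this] using norm_integral_le_of_norm_le_const (μ := μ) (f := fun z => u y - u z) hy
  -- the linear term integrates to zero, leaving the second-order Taylor remainder
  have hgap : ∫ y, φ (u y) ∂μ - φ m = ∫ y, (φ (u y) - φ m - deriv φ m * (u y - m)) ∂μ := by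
    have hlin : ∫ y, deriv φ m * (u y - m) ∂μ = 0 := by
      rw [integral_const_mul, integral_sub hu (integrable_const m)]
      simp [m]
    have hlin_int : Integrable (fun y => deriv φ m * (u y - m)) μ :=
      (hu.sub (integrable_const m)).const_mul _
    rw [integral_sub (f := fun y => φ (u y) - φ m) (hφu.sub (integrable_const _)) hlin_int, hlin,
      integral_sub hφu (integrable_const _)]
    simp
  have hbound : ∀ᵐ y ∂μ, ‖φ (u y) - φ m - deriv φ m * (u y - m)‖ ≤ C * δ ^ 2 := by
    filter_upwards [hus, hdev] with y hy hyδ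
    have hC0 : 0 ≤ C := (abs_nonneg _).trans (hC m hm)
    calc ‖φ (u y) - φ m - deriv φ m * (u y - m)‖ ≤ C * (u y - m) ^ 2 :=
          hs.abs_sub_sub_deriv_mul_le hφ hφ' hC hm hy
      _ ≤ C * δ ^ 2 := by
          rw [← sq_abs]
          gcongr
  simpa [hgap] using norm_integral_le_of_norm_le_const hbound

end JensenGap

section Taylor

theorem tendsto_div_pow_succ_of_hasDerivAt {φ ψ : ℝ → ℝ} {c : ℝ} {n : ℕ}
    (hφ : ∀ᶠ t in 𝓝 0, HasDerivAt φ (ψ t) t) (hφ0 : φ 0 = 0)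
    (hψ : Tendsto (fun t => ψ t / t ^ n) (𝓝[≠] 0) (𝓝 c)) :
    Tendsto (fun t => φ t / t ^ (n + 1)) (𝓝[≠] 0) (𝓝 (c / (n + 1))) := by
  refine HasDerivAt.lhopital_zero_nhdsNE (f' := ψ) (g' := fun t => (n + 1) * t ^ n)
    (nhdsWithin_le_nhds hφ) (Eventually.of_forall fun t => ?_) ?_ ?_ ?_ ?_
  · simpa using hasDerivAt_pow (n + 1) t
  · filter_upwards [self_mem_nhdsWithin] with t (ht : t ≠ 0)
    positivity
  · simpa [hφ0] using hφ.self_of_nhds.continuousAt.tendsto.mono_left nhdsWithin_le_nhds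
  · exact tendsto_nhdsWithin_of_tendsto_nhds
      (by simpa using (continuous_pow (n + 1)).tendsto (0 : ℝ))
  · refine (hψ.div_const (n + 1)).congr fun t => ?_
    rw [div_div, mul_comm]

variable {g : ℝ → ℝ} {x c : ℝ}

theorem tendsto_sub_sub_deriv_mul_div_sq (hg : Differentiable ℝ g)
    (hg' : HasDerivAt (deriv g) c x) :
    Tendsto (fun t => (g (x + t) - g x - deriv g x * t) / t ^ 2) (𝓝[≠] 0) (𝓝 (c / 2)) := by
  have hderiv : ∀ t, HasDerivAt (fun t => g (x + t) - g x - deriv g x * t)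
      (deriv g (x + t) - deriv g x) t := fun t =>
    ((((hg _).hasDerivAt.comp_const_add x t).sub_const _).sub
      ((hasDerivAt_id t).const_mul _)).congr_deriv (by simp)
  have hslope : Tendsto (fun t => (deriv g (x + t) - deriv g x) / t ^ 1) (𝓝[≠] 0) (𝓝 c) := by
    simpa [div_eq_inv_mul] using hasDerivAt_iff_tendsto_slope_zero.mp hg'
  simpa [one_add_one_eq_two] using
    tendsto_div_pow_succ_of_hasDerivAt (Eventually.of_forall hderiv) (by simp) hslope

theorem tendsto_one_div_mul_intervalIntegral_sub_sub_div_sq (hg : Differentiable ℝ g)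
    (hg' : HasDerivAt (deriv g) c x) :
    Tendsto (fun t => ((1 / t) * (∫ y in x..x + t, g y) - g x - t / 2 * deriv g x) / t ^ 2)
      (𝓝[≠] 0) (𝓝 (c / 6)) := by
  have hderiv : ∀ t, HasDerivAt
      (fun t => (∫ y in x..x + t, g y) - t * g x - t ^ 2 / 2 * deriv g x)
      (g (x + t) - g x - deriv g x * t) t := by
    intro t
    have hint : HasDerivAt (fun w => ∫ y in x..w, g y) (g (x + t)) (x + t) :=
      intervalIntegral.integral_hasDerivAt_right (hg.continuous.intervalIntegrable _ _)
        hg.continuous.aestronglyMeasurable.stronglyMeasurableAtFilter hg.continuous.continuousAt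
    refine (((hint.comp_const_add x t).sub ((hasDerivAt_id t).mul_const _)).sub
      (((hasDerivAt_pow 2 t).div_const 2).mul_const _)).congr_deriv ?_
    push_cast
    ring
  have hcube := tendsto_div_pow_succ_of_hasDerivAt (Eventually.of_forall hderiv) (by simp)
    (tendsto_sub_sub_deriv_mul_div_sq hg hg')
  rw [show c / 2 / ((2 : ℕ) + 1) = c / 6 by push_cast; ring] at hcube
  refine hcube.congr' ?_
  filter_upwards [self_mem_nhdsWithin] with t (ht : t ≠ 0)
  field_simp
  ring

theorem tendsto_comp_div_sq {q d : ℝ → ℝ} {l : Filter ℝ} {c k : ℝ} (hq0 : q 0 = 0)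
    (hq : Tendsto (fun t => q t / t ^ 2) (𝓝[≠] 0) (𝓝 c)) (hd0 : Tendsto d l (𝓝 0))
    (hd : Tendsto (fun h => d h / h) l (𝓝 k)) :
    Tendsto (fun h => q (d h) / h ^ 2) l (𝓝 (c * k ^ 2)) := by
  classical
  -- `q t = r t * t ^ 2` with `r` continuous at `0`, which also covers the points where `d h = 0`
  set r := Function.update (fun t => q t / t ^ 2) 0 c
  have hr : Tendsto r (𝓝 0) (𝓝 c) := by
    simpa [r, ContinuousAt] using continuousAt_update_same.mpr hq
  have hqr : ∀ t, q t = r t * t ^ 2 := by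
    intro t
    by_cases ht : t = 0
    · simp [r, ht, hq0]
    · simp [r, ht]
  refine ((hr.comp hd0).mul (hd.pow 2)).congr fun h => ?_
  simp [hqr (d h), div_pow, mul_div_assoc]

end Taylor

section IntervalJensenGap

noncomputable def intervalJensenGap (φ u : ℝ → ℝ) (h x : ℝ) : ℝ :=
  (⨍ y in x..x + h, φ (u y)) - φ (⨍ y in x..x + h, u y)

theorem interval_average_add_eq_one_div_mul (g : ℝ → ℝ) (x h : ℝ) :
    ⨍ y in x..x + h, g y = (1 / h) * ∫ y in x..x + h, g y := by
  rw [interval_average_eq, add_sub_cancel_left, smul_eq_mul, one_div]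

variable {φ u : ℝ → ℝ} {h : ℝ}

theorem tendsto_intervalJensenGap_div_sq (hφ : ContDiff ℝ 2 φ) (hu : ContDiff ℝ 2 u) (x : ℝ) :
    Tendsto (fun h => intervalJensenGap φ u h x / h ^ 2) (𝓝[≠] 0)
      (𝓝 (deriv (deriv φ) (u x) * deriv u x ^ 2 / 24)) := by
  have hφ1 := hφ.differentiable two_ne_zero
  have hφ2 := hφ.differentiable_deriv_two
  have hu1 := hu.differentiable two_ne_zero
  have hu2 := hu.differentiable_deriv_two
  have hφu1 : Differentiable ℝ fun y => φ (u y) := hφ1.comp hu1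
  have hφu' : deriv (fun y => φ (u y)) = fun y => deriv φ (u y) * deriv u y :=
    funext fun y => ((hφ1 (u y)).hasDerivAt.comp y (hu1 y).hasDerivAt).deriv
  have hφu'' : HasDerivAt (deriv fun y => φ (u y))
      (deriv (deriv φ) (u x) * deriv u x * deriv u x + deriv φ (u x) * deriv (deriv u) x) x := by
    rw [hφu']
    exact ((hφ2 (u x)).hasDerivAt.comp x (hu1 x).hasDerivAt).mul (hu2 x).hasDerivAt
  have hφu_avg := tendsto_one_div_mul_intervalIntegral_sub_sub_div_sq hφu1 hφu''
  have hu_avg := tendsto_one_div_mul_intervalIntegral_sub_sub_div_sq hu1 (hu2 x).hasDerivAt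
  set d := fun h : ℝ => (1 / h) * (∫ y in x..x + h, u y) - u x
  have hh : Tendsto (fun h : ℝ => h) (𝓝[≠] 0) (𝓝 0) := tendsto_nhdsWithin_of_tendsto_nhds tendsto_id
  have hd : Tendsto (fun h => d h / h) (𝓝[≠] 0) (𝓝 (deriv u x / 2)) := by
    have := (hh.mul hu_avg).add_const (deriv u x / 2)
    rw [zero_mul, zero_add] at this
    refine this.congr' ?_
    filter_upwards [self_mem_nhdsWithin] with h (h0 : h ≠ 0)
    simp only [d]
    field_simp
    ring
  have hd0 : Tendsto d (𝓝[≠] 0) (𝓝 0) := by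
    have := hh.mul hd
    rw [zero_mul] at this
    refine this.congr' ?_
    filter_upwards [self_mem_nhdsWithin] with h (h0 : h ≠ 0)
    field_simp
  have hφ_rem := tendsto_comp_div_sq (q := fun t => φ (u x + t) - φ (u x) - deriv φ (u x) * t)
    (by simp) (tendsto_sub_sub_deriv_mul_div_sq hφ1 (hφ2 (u x)).hasDerivAt) hd0 hd
  -- the gap is the remainder of `⨍ φ ∘ u`, minus `φ' (u x)` times that of `⨍ u`, minus that of `φ`
  convert (hφu_avg.sub (hu_avg.const_mul (deriv φ (u x)))).sub hφ_rem using 2 with h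
  · simp only [intervalJensenGap, interval_average_add_eq_one_div_mul, hφu', d, add_sub_cancel]
    ring
  · ring

theorem continuous_intervalJensenGap (hφ : Continuous φ) (hu : Continuous u) (h : ℝ) :
    Continuous (intervalJensenGap φ u h) := by
  unfold intervalJensenGap
  simp_rw [interval_average_add_eq_one_div_mul]
  exact (continuous_const.mul (continuous_intervalIntegral_add (hφ.comp hu) h)).sub
    (hφ.comp (continuous_const.mul (continuous_intervalIntegral_add hu h)))

theorem intervalJensenGap_eq_zero (hφ0 : φ 0 = 0) {x : ℝ}
    (hu : ∀ y ∈ uIcc x (x + h), u y = 0) : intervalJensenGap φ u h x = 0 := by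
  have hu_int : ∫ y in x..x + h, u y = 0 := by
    rw [intervalIntegral.integral_congr (g := fun _ => (0 : ℝ)) hu, intervalIntegral.integral_zero]
  have hφu_int : ∫ y in x..x + h, φ (u y) = 0 := by
    rw [intervalIntegral.integral_congr (g := fun _ => (0 : ℝ)) fun y hy => by simp [hu y hy, hφ0],
      intervalIntegral.integral_zero]
  simp [intervalJensenGap, interval_average_add_eq_one_div_mul, hu_int, hφu_int, hφ0]

theorem intervalJensenGap_eq_zero_of_notMem_Icc {a b x : ℝ} (hφ0 : φ 0 = 0)
    (hu0 : ∀ y ∉ Ioo a b, u y = 0) (hh : 0 ≤ h) (hx : x ∉ Icc (a - h) b) :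
    intervalJensenGap φ u h x = 0 := by
  refine intervalJensenGap_eq_zero hφ0 fun y hy => hu0 y fun hy' => hx ⟨?_, ?_⟩ <;>
    rw [uIcc_of_le (by linarith)] at hy
  · linarith [hy.2, hy'.1]
  · linarith [hy.1, hy'.2]

theorem abs_intervalJensenGap_le {M C : ℝ} {K : ℝ≥0} (hφ : Differentiable ℝ φ)
    (hφ' : Differentiable ℝ (deriv φ)) (hC : ∀ r ∈ Icc (-M) M, |deriv (deriv φ) r| ≤ C)
    (hu : Continuous u) (huM : ∀ y, |u y| ≤ M) (hK : LipschitzWith K u) (hh : 0 < h) (x : ℝ) :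
    |intervalJensenGap φ u h x| ≤ C * (K * h) ^ 2 := by
  set μ := volume.restrict (uIoc x (x + h))
  have : IsFiniteMeasure μ := isFiniteMeasure_restrict.2 (by simp)
  have : NeZero μ := ⟨by simp [μ, Measure.restrict_eq_zero, hh.ne']⟩
  have hae : ∀ {p : ℝ → Prop}, (∀ y ∈ uIoc x (x + h), p y) → ∀ᵐ y ∂(μ univ)⁻¹ • μ, p y :=
    fun hp => Measure.ae_smul_measure (ae_restrict_of_forall_mem measurableSet_uIoc hp) _
  have hosc : ∀ y ∈ uIoc x (x + h), ∀ z ∈ uIoc x (x + h), |u y - u z| ≤ K * h := by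
    intro y hy z hz
    calc |u y - u z| = dist (u y) (u z) := rfl
      _ ≤ K * dist y z := hK.dist_le_mul y z
      _ ≤ K * h := by
        gcongr
        simpa [Real.dist_eq, abs_of_pos hh] using
          Real.dist_le_of_mem_uIcc (uIoc_subset_uIcc hy) (uIoc_subset_uIcc hz)
  exact abs_integral_comp_sub_comp_integral_le (convex_Icc (-M) M) isClosed_Icc hφ hφ' hC
    hu.integrableOn_uIoc.to_average (hφ.continuous.comp hu).integrableOn_uIoc.to_average
    (hae fun y _ => abs_le.mp (huM y)) (hae fun y hy => hae fun z hz => hosc y hy z hz)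

theorem integral_sub_comp_interval_average_eq (hφu : Integrable fun y => φ (u y))
    (hgap : Integrable (intervalJensenGap φ u h)) (hh : h ≠ 0) :
    ∫ x, (φ (u x) - φ (⨍ y in x..x + h, u y)) = ∫ x, intervalJensenGap φ u h x := by
  have havg_int : Integrable fun x => ⨍ y in x..x + h, φ (u y) := by
    simp_rw [interval_average_add_eq_one_div_mul]
    exact (hφu.intervalIntegral_add h).const_mul _
  have havg : ∫ x, ⨍ y in x..x + h, φ (u y) = ∫ x, φ (u x) := by
    simp_rw [interval_average_add_eq_one_div_mul]
    rw [integral_const_mul, integral_intervalIntegral_add hφu, ← mul_assoc,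
      one_div_mul_cancel hh, one_mul]
  calc ∫ x, (φ (u x) - φ (⨍ y in x..x + h, u y))
      = ∫ x, ((φ (u x) - ⨍ y in x..x + h, φ (u y)) + intervalJensenGap φ u h x) := by
        simp [intervalJensenGap]
    _ = ∫ x, intervalJensenGap φ u h x := by
        rw [integral_add (f := fun x => φ (u x) - ⨍ y in x..x + h, φ (u y))
          (hφu.sub havg_int) hgap, integral_sub hφu havg_int, havg, sub_self, zero_add]

end IntervalJensenGap

theorem tendsto_integral_sub_comp_interval_average_div_sq {f u : ℝ → ℝ} {a b : ℝ}
    (hf : ContDiff ℝ 2 f) (hf0 : f 0 = 0) (hu : ContDiff ℝ 2 u)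
    (hu0 : ∀ x ∉ Ioo a b, u x = 0) :
    Tendsto (fun h => (∫ x, (f (u x) - f (⨍ y in x..x + h, u y))) / h ^ 2) (𝓝[>] 0)
      (𝓝 (∫ x, deriv (deriv f) (u x) * deriv u x ^ 2 / 24)) := by
  have hsupp : HasCompactSupport u := HasCompactSupport.intro isCompact_Icc
    fun x hx => hu0 x fun hx' => hx (Ioo_subset_Icc_self hx')
  obtain ⟨M, hM⟩ := hu.continuous.bounded_above_of_compact_support hsupp
  obtain ⟨K, hK⟩ := hu.lipschitzWith_of_hasCompactSupport hsupp two_ne_zero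
  obtain ⟨C, hC⟩ := isCompact_Icc.exists_bound_of_continuousOn (s := Icc (-M) M)
    ((hf.deriv' (n := 1)).continuous_deriv le_rfl).continuousOn
  have hgap_cont := continuous_intervalJensenGap hf.continuous hu.continuous
  have hvanish {h x : ℝ} (hh : 0 ≤ h) (hx : x ∉ Icc (a - h) b) : intervalJensenGap f u h x = 0 :=
    intervalJensenGap_eq_zero_of_notMem_Icc hf0 hu0 hh hx
  have hgap_le : ∀ h ∈ Ioc (0 : ℝ) 1, ∀ x, ‖intervalJensenGap f u h x / h ^ 2‖ ≤
      (Icc (a - 1) b).indicator (fun _ => C * K ^ 2) x := by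
    rintro h ⟨hh0, hh1⟩ x
    by_cases hx : x ∈ Icc (a - 1) b
    · rw [indicator_of_mem hx, norm_div, norm_pow, Real.norm_of_nonneg hh0.le, Real.norm_eq_abs,
        div_le_iff₀ (by positivity), mul_assoc, ← mul_pow]
      exact abs_intervalJensenGap_le (hf.differentiable two_ne_zero) hf.differentiable_deriv_two
        hC hu.continuous hM hK hh0 x
    · rw [indicator_of_notMem hx, hvanish hh0.le fun hx' => hx ⟨by linarith [hx'.1], hx'.2⟩,
        zero_div, norm_zero]
  have hlim : Tendsto (fun h => ∫ x, intervalJensenGap f u h x / h ^ 2) (𝓝[>] 0)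
      (𝓝 (∫ x, deriv (deriv f) (u x) * deriv u x ^ 2 / 24)) :=
    tendsto_integral_filter_of_dominated_convergence _
      (Eventually.of_forall fun h => ((hgap_cont h).div_const _).aestronglyMeasurable)
      (eventually_of_mem (Ioc_mem_nhdsGT one_pos) fun h hh => Eventually.of_forall (hgap_le h hh))
      ((integrableOn_const measure_Icc_lt_top.ne).integrable_indicator measurableSet_Icc)
      (Eventually.of_forall fun x =>
        (tendsto_intervalJensenGap_div_sq hf hu x).mono_left (nhdsGT_le_nhdsNE 0))
  have hfu_int : Integrable fun x => f (u x) :=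
    (hf.continuous.comp hu.continuous).integrable_of_hasCompactSupport (hsupp.comp_left hf0)
  refine hlim.congr' ?_
  filter_upwards [self_mem_nhdsWithin] with h (hh : 0 < h)
  have hgap_int : Integrable (intervalJensenGap f u h) :=
    (hgap_cont h).integrable_of_hasCompactSupport
      (HasCompactSupport.intro isCompact_Icc fun x hx => hvanish hh.le hx)
  rw [integral_div, integral_sub_comp_interval_average_eq hfu_int hgap_int hh.ne']

theorem pointwise_limit_one_dim_general (a b : ℝ)
    (f : ℝ → ℝ) (hf : ContDiff ℝ 2 f)
    (hf0 : f 0 = 0)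
    (u : ℝ → ℝ) (hu2 : ContDiff ℝ 2 u)
    (hu0 : ∀ x ∉ Ioo a b, u x = 0) :
    Tendsto
      (fun h : ℝ =>
        (1 / h ^ 2) * ∫ x, (f (u x) - f ((1 / h) * ∫ y in x..(x + h), u y)))
      (𝓝[>] 0)
      (𝓝 ((1 / 24) * ∫ x, deriv (deriv f) (u x) * (deriv u x) ^ 2)) := by
  have hlim := tendsto_integral_sub_comp_interval_average_div_sq hf hf0 hu2 hu0
  simp_rw [interval_average_add_eq_one_div_mul, integral_div] at hlim
  convert hlim using 2 <;> ring

/-- If `f` is `C²` with `f(0) = f'(0) = 0` and `u ∈ Y ∩ C²(ℝ)`, then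
`lim_{h→0⁺} E_h(u) = (1/24) ∫_ℝ f''(u(x)) |u'(x)|² dx`. -/
theorem pointwise_limit_one_dim (a b : ℝ) (hab : a < b)
    (f : ℝ → ℝ) (hf : ContDiff ℝ 2 f) (hfpos : ∀ t, 0 ≤ f t)
    (hf0 : f 0 = 0) (hf'0 : deriv f 0 = 0)
    (u : ℝ → ℝ) (hu2 : ContDiff ℝ 2 u)
    (huY : MemLp u 2 (volume : Measure ℝ)) (hu0 : ∀ x ∉ Ioo a b, u x = 0) :
    Tendsto
      (fun h : ℝ =>
        (1 / h ^ 2) * ∫ x, (f (u x) - f ((1 / h) * ∫ y in x..(x + h), u y)))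
      (𝓝[>] 0)
      (𝓝 ((1 / 24) * ∫ x, deriv (deriv f) (u x) * (deriv u x) ^ 2)) :=
  pointwise_limit_one_dim_general a b f hf hf0 u hu2 hu0
end

section
/- If additionally f'' ≤ c for some constant c > 0, then for every u ∈ Y ∩ H¹(ℝ) and every h > 0, E_h(u) ≤ (c/2) ∫_ℝ |u'(x)|² dx. -/
open MeasureTheory Set intervalIntegral

lemma tangent_le {g : ℝ → ℝ} (hg : Differentiable ℝ g) (hg' : Monotone (deriv g)) (s t : ℝ) :
    g s + deriv g s * (t - s) ≤ g t := by
  have hcv : ConvexOn ℝ Set.univ g := hg'.convexOn_univ_of_deriv hg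
  rcases lt_trichotomy s t with hst | rfl | hts
  · have hsl := hcv.deriv_le_slope (mem_univ s) (mem_univ t) hst (hg s)
    rw [slope_def_field] at hsl
    have := (le_div_iff₀ (sub_pos.mpr hst)).1 hsl
    linarith
  · simp
  · have hsl := hcv.slope_le_deriv (mem_univ t) (mem_univ s) hts (hg s)
    rw [slope_def_field] at hsl
    have := (div_le_iff₀ (sub_pos.mpr hts)).1 hsl
    linarith

lemma taylor_bounds {f : ℝ → ℝ} {γ c : ℝ} (hf : ContDiff ℝ 2 f) (hγ : 0 < γ)
    (hf''l : ∀ t, γ ≤ deriv (deriv f) t) (hf''u : ∀ t, deriv (deriv f) t ≤ c) :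
    (∀ s t, f s + deriv f s * (t - s) ≤ f t) ∧
    (∀ s t, deriv f s * (s - t) ≤ f s - f t + c / 2 * (s - t) ^ 2) := by
  have hdf : Differentiable ℝ f := hf.differentiable (by norm_num)
  have hf1 : ContDiff ℝ 1 (deriv f) := by
    have h2 : ContDiff ℝ ((1 : ℕ) + 1) f := by exact_mod_cast hf
    exact (contDiff_succ_iff_deriv.mp h2).2.2
  have hdf' : Differentiable ℝ (deriv f) := hf1.differentiable (by norm_num)
  have mono1 : Monotone (deriv f) :=
    monotone_of_deriv_nonneg hdf' fun t => le_trans hγ.le (hf''l t)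
  have T1 : ∀ s t, f s + deriv f s * (t - s) ≤ f t := tangent_le hdf mono1
  refine ⟨T1, ?_⟩
  set g : ℝ → ℝ := fun t => c / 2 * t ^ 2 - f t with hgdef
  have hgD : ∀ t, HasDerivAt g (c * t - deriv f t) t := by
    intro t
    have h1 : HasDerivAt (fun t : ℝ => c / 2 * t ^ 2) (c / 2 * (2 * t ^ 1)) t :=
      (hasDerivAt_pow 2 t).const_mul (c / 2)
    have := h1.sub (hdf t).hasDerivAt
    exact this.congr_deriv (by ring)
  have hgderiv : deriv g = fun t => c * t - deriv f t := funext fun t => (hgD t).deriv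
  have hdg : Differentiable ℝ g := fun t => ((hgD t).differentiableAt)
  have monog : Monotone (deriv g) := by
    rw [hgderiv]
    refine monotone_of_deriv_nonneg ((differentiable_id.const_mul c).sub hdf') fun t => ?_
    have hD : HasDerivAt (fun t => c * t - deriv f t) (c * 1 - deriv (deriv f) t) t :=
      ((hasDerivAt_id t).const_mul c).sub (hdf' t).hasDerivAt
    rw [hD.deriv]
    have := hf''u t
    linarith
  intro s t
  have H := tangent_le hdg monog s t
  rw [hgderiv] at H
  simp only [hgdef] at H
  nlinarith [H]

lemma cs_sq {g : ℝ → ℝ} {s : Set ℝ} (hvol : volume s ≠ ⊤)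
    (hg : IntegrableOn g s) (hg2 : IntegrableOn (fun y => g y ^ 2) s) :
    (∫ y in s, g y) ^ 2 ≤ (volume s).toReal * ∫ y in s, g y ^ 2 := by
  set v := (volume s).toReal with hvdef
  have hv0 : 0 ≤ v := ENNReal.toReal_nonneg
  rcases eq_or_lt_of_le hv0 with hv | hv
  · have hz : volume s = 0 := by
      rcases (ENNReal.toReal_eq_zero_iff _).mp hv.symm with h0 | h0
      · exact h0
      · exact absurd h0 hvol
    rw [Measure.restrict_eq_zero.mpr hz]
    simp
  · set I := ∫ y in s, g y with hI
    set J := ∫ y in s, g y ^ 2 with hJ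
    set m := I / v with hm
    have hconst : IntegrableOn (fun _ : ℝ => m ^ 2) s := by
      refine (integrableOn_const_iff).mpr (Or.inr ?_)
      exact lt_top_iff_ne_top.mpr hvol
    have hfun : (fun y => (g y - m) ^ 2) = fun y => g y ^ 2 - g y * (2 * m) + m ^ 2 :=
      funext fun y => by ring
    have e1 : ∫ y in s, (g y ^ 2 - g y * (2 * m) + m ^ 2) =
        (∫ y in s, (g y ^ 2 - g y * (2 * m))) + ∫ _y in s, (m ^ 2 : ℝ) :=
      integral_add (hg2.sub (hg.mul_const _)) hconst
    have e2 : ∫ y in s, (g y ^ 2 - g y * (2 * m)) =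
        J - ∫ y in s, g y * (2 * m) := integral_sub hg2 (hg.mul_const _)
    have e3 : ∫ y in s, g y * (2 * m) = I * (2 * m) := by
      rw [MeasureTheory.integral_mul_const]
    have e4 : ∫ _y in s, (m ^ 2 : ℝ) = v * m ^ 2 := by
      rw [setIntegral_const, smul_eq_mul]
      rfl
    have expand : ∫ y in s, (g y - m) ^ 2 = J - I * (2 * m) + v * m ^ 2 := by
      rw [hfun, e1, e2, e3, e4]
    have pos : 0 ≤ ∫ y in s, (g y - m) ^ 2 := integral_nonneg fun y => sq_nonneg _
    have key : 0 ≤ J - I * (2 * m) + v * m ^ 2 := expand ▸ pos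
    have hvm : v * m = I := by rw [hm]; field_simp [hv.ne']
    nlinarith [mul_nonneg hv.le key]

lemma tonelli_slide {φ : ℝ → ℝ} (hφ : Integrable φ) (hφ0 : ∀ y, 0 ≤ φ y) {h : ℝ} (hh : 0 < h) :
    Integrable (fun x => ∫ y in Ioc x (x + h), φ y) ∧
      ∫ x, (∫ y in Ioc x (x + h), φ y) = h * ∫ y, φ y := by
  set V : ℝ → ℝ := fun x => ∫ y in Ioc x (x + h), φ y with hVdef
  have hVcont : Continuous V := by
    have heq : V = fun x => (∫ y in (0:ℝ)..(x + h), φ y) - ∫ y in (0:ℝ)..x, φ y := by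
      funext x
      have hadj := integral_add_adjacent_intervals (a := (0:ℝ)) (b := x) (c := x + h)
        hφ.intervalIntegrable hφ.intervalIntegrable
      have : V x = ∫ y in x..(x + h), φ y := (integral_of_le (by linarith)).symm
      rw [this]; linarith
    rw [heq]
    exact ((hφ.continuous_primitive 0).comp (continuous_id.add continuous_const)).sub
      (hφ.continuous_primitive 0)
  have hV0 : ∀ x, 0 ≤ V x := fun x => setIntegral_nonneg measurableSet_Ioc fun y _ => hφ0 y
  set g : ℝ → ENNReal := fun y => ENNReal.ofReal (φ y) with hgdef
  have hg : AEMeasurable g volume :=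
    ENNReal.measurable_ofReal.comp_aemeasurable hφ.aemeasurable
  have hx_eq : ∀ x, ENNReal.ofReal (V x) = ∫⁻ y in Ioc x (x + h), g y := fun x =>
    ofReal_integral_eq_lintegral_ofReal hφ.integrableOn (ae_of_all _ fun y => hφ0 y)
  have hS : MeasurableSet {p : ℝ × ℝ | p.1 < p.2 ∧ p.2 ≤ p.1 + h} :=
    (measurableSet_lt measurable_fst measurable_snd).inter
      (measurableSet_le measurable_snd (measurable_fst.add_const h))
  have swap : ∫⁻ x, ∫⁻ y in Ioc x (x + h), g y = ENNReal.ofReal h * ∫⁻ y, g y := by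
    have hunc : AEMeasurable
        (Function.uncurry fun x y =>
          Set.indicator {p : ℝ × ℝ | p.1 < p.2 ∧ p.2 ≤ p.1 + h} (fun p => g p.2) (x, y))
        ((volume : Measure ℝ).prod volume) := by
      have : AEMeasurable (fun p : ℝ × ℝ => g p.2) ((volume : Measure ℝ).prod volume) :=
        hg.comp_snd
      exact this.indicator hS
    calc ∫⁻ x, ∫⁻ y in Ioc x (x + h), g y
        = ∫⁻ x, ∫⁻ y,
            Set.indicator {p : ℝ × ℝ | p.1 < p.2 ∧ p.2 ≤ p.1 + h} (fun p => g p.2) (x, y) := by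
          refine lintegral_congr fun x => ?_
          rw [← lintegral_indicator measurableSet_Ioc]
          refine lintegral_congr fun y => ?_
          by_cases hy : y ∈ Ioc x (x + h)
          · rw [Set.indicator_of_mem hy, Set.indicator_of_mem
              (show (x, y) ∈ {p : ℝ × ℝ | p.1 < p.2 ∧ p.2 ≤ p.1 + h} from ⟨hy.1, hy.2⟩)]
          · rw [Set.indicator_of_notMem hy,
              Set.indicator_of_notMem (fun hc => hy ⟨hc.1, hc.2⟩)]
      _ = ∫⁻ y, ∫⁻ x,
            Set.indicator {p : ℝ × ℝ | p.1 < p.2 ∧ p.2 ≤ p.1 + h} (fun p => g p.2) (x, y) :=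
          lintegral_lintegral_swap hunc
      _ = ∫⁻ y, g y * ENNReal.ofReal h := by
          refine lintegral_congr fun y => ?_
          have hmem : ∀ x : ℝ,
              Set.indicator {p : ℝ × ℝ | p.1 < p.2 ∧ p.2 ≤ p.1 + h} (fun p => g p.2) (x, y) =
              Set.indicator (Ico (y - h) y) (fun _ => g y) x := by
            intro x
            by_cases hx : x ∈ Ico (y - h) y
            · rw [Set.indicator_of_mem hx, Set.indicator_of_mem]
              simp only [Set.mem_setOf_eq]
              obtain ⟨h1, h2⟩ := hx
              exact ⟨h2, by linarith⟩
            · rw [Set.indicator_of_notMem hx, Set.indicator_of_notMem]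
              intro hc
              obtain ⟨h1, h2⟩ := hc
              exact hx ⟨by linarith, h1⟩
          calc ∫⁻ x, Set.indicator {p : ℝ × ℝ | p.1 < p.2 ∧ p.2 ≤ p.1 + h}
                  (fun p => g p.2) (x, y)
              = ∫⁻ x, Set.indicator (Ico (y - h) y) (fun _ => g y) x :=
                lintegral_congr hmem
            _ = g y * volume (Ico (y - h) y) :=
                lintegral_indicator_const measurableSet_Ico _
            _ = g y * ENNReal.ofReal h := by rw [Real.volume_Ico]; ring_nf
      _ = ENNReal.ofReal h * ∫⁻ y, g y := by
          rw [lintegral_mul_const'' _ hg, mul_comm]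
  have hlint : ∫⁻ y, g y = ENNReal.ofReal (∫ y, φ y) :=
    (ofReal_integral_eq_lintegral_ofReal hφ (ae_of_all _ hφ0)).symm
  have hlintV : ∫⁻ x, ENNReal.ofReal (V x) = ENNReal.ofReal (h * ∫ y, φ y) := by
    calc ∫⁻ x, ENNReal.ofReal (V x) = ∫⁻ x, ∫⁻ y in Ioc x (x + h), g y :=
          lintegral_congr fun x => hx_eq x
      _ = ENNReal.ofReal h * ENNReal.ofReal (∫ y, φ y) := by rw [swap, hlint]
      _ = ENNReal.ofReal (h * ∫ y, φ y) := (ENNReal.ofReal_mul hh.le).symm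
  have hVint : Integrable V := by
    refine ⟨hVcont.aestronglyMeasurable, ?_⟩
    rw [hasFiniteIntegral_iff_ofReal (ae_of_all _ hV0), hlintV]
    exact ENNReal.ofReal_lt_top
  refine ⟨hVint, ?_⟩
  rw [integral_eq_lintegral_of_nonneg_ae (ae_of_all _ hV0) hVcont.aestronglyMeasurable, hlintV,
    ENNReal.toReal_ofReal (mul_nonneg hh.le (integral_nonneg hφ0))]

/-- If moreover `f'' ≤ c` for some `c > 0`, then for every `u ∈ Y ∩ H¹(ℝ)` and `h > 0`,
`E_h(u) ≤ (c/2) ∫_ℝ |u'(x)|² dx`, where `u'` is the weak derivative of `u`. -/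
theorem energy_upper_bound (a b : ℝ) (hab : a < b)
    (f : ℝ → ℝ) (hf : ContDiff ℝ 2 f) (hfpos : ∀ t, 0 ≤ f t)
    (hf0 : f 0 = 0) (hf'0 : deriv f 0 = 0)
    (γ : ℝ) (hγ : 0 < γ) (hf''l : ∀ t, γ ≤ deriv (deriv f) t)
    (c : ℝ) (hc : 0 < c) (hf''u : ∀ t, deriv (deriv f) t ≤ c)
    (u : ℝ → ℝ) (hu : MemLp u 2 (volume : Measure ℝ))
    (hu0 : ∀ x ∉ Ioo a b, u x = 0)
    -- `u ∈ H¹(ℝ)`: `u` has a weak derivative `u' ∈ L²` (absolutely continuous representative)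
    (u' : ℝ → ℝ) (hu' : MemLp u' 2 (volume : Measure ℝ))
    (hFTC : ∀ x y : ℝ, u y - u x = ∫ z in x..y, u' z)
    (h : ℝ) (hh : 0 < h) :
    (1 / h ^ 2) * ∫ x, (f (u x) - f ((1 / h) * ∫ y in x..(x + h), u y)) ≤
      (c / 2) * ∫ x, (u' x) ^ 2 := by
  have hua : u a = 0 := hu0 a (by simp)
  have hu'sq : Integrable (fun y => u' y ^ 2) volume := hu'.integrable_sq
  have hu'II : ∀ s t : ℝ, IntervalIntegrable u' volume s t := by
    intro s t
    rw [intervalIntegrable_iff]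
    have hμ : volume (Set.uIoc s t) < ⊤ := by rw [Set.uIoc]; exact measure_Ioc_lt_top
    have hbound : IntegrableOn (fun y => (u' y ^ 2 + 1) / 2) (Set.uIoc s t) := by
      refine Integrable.div_const ?_ 2
      exact hu'sq.integrableOn.add ((integrableOn_const_iff).mpr (Or.inr hμ))
    refine hbound.mono' hu'.1.restrict (ae_of_all _ fun y => ?_)
    rw [Real.norm_eq_abs]
    nlinarith [sq_nonneg (|u' y| - 1), sq_abs (u' y)]
  have hucont : Continuous u := by
    have hform : u = fun y => ∫ z in a..y, u' z := funext fun y => by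
      have := hFTC a y; rw [hua] at this; linarith
    rw [hform]
    exact intervalIntegral.continuous_primitive hu'II a
  have huII : ∀ s t : ℝ, IntervalIntegrable u volume s t := fun s t =>
    hucont.intervalIntegrable s t
  obtain ⟨T1, T2⟩ := taylor_bounds hf hγ hf''l hf''u
  have hFcont : Continuous (fun x => f (u x)) := hf.continuous.comp hucont
  have hFint : Integrable (fun x => f (u x)) := by
    refine hFcont.integrable_of_hasCompactSupport
      (HasCompactSupport.intro (isCompact_Icc (a := a) (b := b)) fun x hx => ?_)
    rw [hu0 x (fun hm => hx ⟨hm.1.le, hm.2.le⟩), hf0]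
  set A : ℝ → ℝ := fun x => (1 / h) * ∫ y in x..(x + h), u y with hAdef
  have hAcont : Continuous A := by
    have hP : Continuous fun x => ∫ y in (0:ℝ)..x, u y :=
      intervalIntegral.continuous_primitive huII 0
    have heq : A = fun x => (1 / h) * ((∫ y in (0:ℝ)..(x + h), u y) - ∫ y in (0:ℝ)..x, u y) := by
      funext x
      have hadj := integral_add_adjacent_intervals (a := (0:ℝ)) (b := x) (c := x + h)
        (huII 0 x) (huII x (x + h))
      rw [hAdef]
      simp only []
      congr 1
      linarith
    rw [heq]
    exact continuous_const.mul ((hP.comp (continuous_id.add continuous_const)).sub hP)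
  have hAzero : ∀ x ∉ Ioo (a - h) b, A x = 0 := by
    intro x hx
    have hz : EqOn u (fun _ => (0:ℝ)) (Set.uIcc x (x + h)) := by
      intro y hy
      rw [Set.uIcc_of_le (by linarith : x ≤ x + h)] at hy
      obtain ⟨hy1, hy2⟩ := hy
      apply hu0
      rintro ⟨hA1, hA2⟩
      rcases lt_or_ge x b with hxb | hxb
      · have hxa : x ≤ a - h := le_of_not_gt fun hcon => hx ⟨hcon, hxb⟩
        linarith
      · linarith
    have h0 : (∫ y in x..(x + h), u y) = 0 := by
      rw [intervalIntegral.integral_congr hz]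
      simp
    rw [hAdef]; simp only []; rw [h0]; ring
  have hfAcont : Continuous (fun x => f (A x)) := hf.continuous.comp hAcont
  have hfAint : Integrable (fun x => f (A x)) := by
    refine hfAcont.integrable_of_hasCompactSupport
      (HasCompactSupport.intro (isCompact_Icc (a := a - h) (b := b)) fun x hx => ?_)
    rw [hAzero x (fun hm => hx ⟨hm.1.le, hm.2.le⟩), hf0]
  obtain ⟨hGGint, hGGval⟩ := tonelli_slide hFint (fun y => hfpos _) hh
  obtain ⟨hVint, hVval⟩ := tonelli_slide hu'sq (fun y => sq_nonneg _) hh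
  set GG : ℝ → ℝ := fun x => ∫ y in Ioc x (x + h), f (u y) with hGGdef
  set V : ℝ → ℝ := fun x => ∫ y in Ioc x (x + h), u' y ^ 2 with hVdef
  have hV0 : ∀ x, 0 ≤ V x := fun x => setIntegral_nonneg measurableSet_Ioc fun y _ => sq_nonneg _
  have star : ∀ x, f (u x) - f (A x) ≤ f (u x) - (1 / h) * GG x + (c * h / 2) * V x := by
    intro x
    have hxx : x ≤ x + h := by linarith
    have hCS : ∀ y ∈ Icc x (x + h), (u x - u y) ^ 2 ≤ h * V x := by
      intro y hy
      obtain ⟨hy1, hy2⟩ := hy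
      have hμ : volume (Ioc x y) ≠ ⊤ := measure_Ioc_lt_top.ne
      have hIoc : IntegrableOn u' (Ioc x y) :=
        (intervalIntegrable_iff_integrableOn_Ioc_of_le hy1).mp (hu'II x y)
      have hcs := cs_sq hμ hIoc hu'sq.integrableOn
      have huy : u y - u x = ∫ z in Ioc x y, u' z := by
        rw [← intervalIntegral.integral_of_le hy1]; exact hFTC x y
      have hvol : (volume (Ioc x y)).toReal = y - x := by
        rw [Real.volume_Ioc, ENNReal.toReal_ofReal (by linarith)]
      have hmono : ∫ z in Ioc x y, u' z ^ 2 ≤ V x := by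
        apply setIntegral_mono_set hu'sq.integrableOn (ae_of_all _ fun z => sq_nonneg _)
        exact HasSubset.Subset.eventuallyLE (Ioc_subset_Ioc_right (by linarith))
      calc (u x - u y) ^ 2 = (∫ z in Ioc x y, u' z) ^ 2 := by rw [← huy]; ring
        _ ≤ (y - x) * ∫ z in Ioc x y, u' z ^ 2 := by rw [← hvol]; exact hcs
        _ ≤ h * V x := by
            apply mul_le_mul (by linarith) hmono
              (setIntegral_nonneg measurableSet_Ioc fun z _ => sq_nonneg _) hh.le
    have hstep1 : f (u x) - f (A x) ≤ deriv f (u x) * (u x - A x) := by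
      have ht := T1 (u x) (A x)
      have e : deriv f (u x) * (A x - u x) = -(deriv f (u x) * (u x - A x)) := by ring
      linarith
    have hstep2 : deriv f (u x) * (u x - A x) =
        (1 / h) * ∫ y in x..(x + h), deriv f (u x) * (u x - u y) := by
      rw [intervalIntegral.integral_const_mul]
      have hsub : (∫ y in x..(x + h), (u x - u y)) = h * u x - ∫ y in x..(x + h), u y := by
        rw [intervalIntegral.integral_sub intervalIntegrable_const (huII x (x + h)),
          intervalIntegral.integral_const]
        simp only [add_sub_cancel_left, smul_eq_mul]
      have hA' : u x - A x = (1 / h) * (h * u x - ∫ y in x..(x + h), u y) := by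
        rw [hAdef]
        have hne : h ≠ 0 := ne_of_gt hh
        field_simp
      rw [hsub, hA']
      ring
    have hstep4 : (∫ y in x..(x + h), deriv f (u x) * (u x - u y)) ≤
        ∫ y in x..(x + h), (f (u x) - f (u y) + c / 2 * (h * V x)) := by
      apply intervalIntegral.integral_mono_on hxx
      · exact (continuous_const.mul (continuous_const.sub hucont)).intervalIntegrable _ _
      · exact ((continuous_const.sub hFcont).add continuous_const).intervalIntegrable _ _
      · intro y hy
        have h1 := T2 (u x) (u y)
        have h2 := hCS y hy
        nlinarith [hc.le]
    have hstep5 : (∫ y in x..(x + h), (f (u x) - f (u y) + c / 2 * (h * V x))) =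
        h * (f (u x) + c / 2 * (h * V x)) - GG x := by
      have hsplit : (fun y => f (u x) - f (u y) + c / 2 * (h * V x)) =
          fun y => (f (u x) + c / 2 * (h * V x)) - f (u y) := funext fun y => by ring
      have hGGx : GG x = ∫ y in x..(x + h), f (u y) := by
        rw [hGGdef]
        exact (intervalIntegral.integral_of_le hxx).symm
      rw [hsplit, intervalIntegral.integral_sub intervalIntegrable_const
        (hFcont.intervalIntegrable _ _), intervalIntegral.integral_const, hGGx]
      simp only [add_sub_cancel_left, smul_eq_mul]
    have hchain : f (u x) - f (A x) ≤ (1 / h) * (h * (f (u x) + c / 2 * (h * V x)) - GG x) := by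
      rw [← hstep5]
      calc f (u x) - f (A x) ≤ deriv f (u x) * (u x - A x) := hstep1
        _ = (1 / h) * ∫ y in x..(x + h), deriv f (u x) * (u x - u y) := hstep2
        _ ≤ (1 / h) * ∫ y in x..(x + h), (f (u x) - f (u y) + c / 2 * (h * V x)) :=
            mul_le_mul_of_nonneg_left hstep4 (by positivity)
    have hcomp : (1 / h) * (h * (f (u x) + c / 2 * (h * V x)) - GG x) =
        f (u x) - (1 / h) * GG x + (c * h / 2) * V x := by
      field_simp
      ring
    linarith
  have hΦint : Integrable (fun x => f (u x) - f (A x)) := hFint.sub hfAint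
  have hΨint : Integrable (fun x => f (u x) - (1 / h) * GG x + (c * h / 2) * V x) :=
    (hFint.sub (hGGint.const_mul (1 / h))).add (hVint.const_mul (c * h / 2))
  have hmain : ∫ x, (f (u x) - f (A x)) ≤ c / 2 * h ^ 2 * ∫ x, u' x ^ 2 := by
    have e1 : ∫ x, (f (u x) - (1 / h) * GG x + (c * h / 2) * V x) =
        (∫ x, (f (u x) - (1 / h) * GG x)) + ∫ x, (c * h / 2) * V x :=
      integral_add (hFint.sub (hGGint.const_mul _)) (hVint.const_mul _)
    have e2 : ∫ x, (f (u x) - (1 / h) * GG x) =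
        (∫ x, f (u x)) - ∫ x, (1 / h) * GG x := integral_sub hFint (hGGint.const_mul _)
    have e3 : ∫ x, (1 / h) * GG x = (1 / h) * ∫ x, GG x :=
      MeasureTheory.integral_const_mul _ _
    have e4 : ∫ x, (c * h / 2) * V x = (c * h / 2) * ∫ x, V x :=
      MeasureTheory.integral_const_mul _ _
    calc ∫ x, (f (u x) - f (A x))
        ≤ ∫ x, (f (u x) - (1 / h) * GG x + (c * h / 2) * V x) :=
          integral_mono hΦint hΨint star
      _ = (∫ x, f (u x)) - (1 / h) * (∫ x, GG x) + (c * h / 2) * ∫ x, V x := by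
          rw [e1, e2, e3, e4]
      _ = c / 2 * h ^ 2 * ∫ x, u' x ^ 2 := by
          rw [hGGval, hVval]
          field_simp
          ring
  calc (1 / h ^ 2) * ∫ x, (f (u x) - f ((1 / h) * ∫ y in x..(x + h), u y))
      = (1 / h ^ 2) * ∫ x, (f (u x) - f (A x)) := rfl
    _ ≤ (1 / h ^ 2) * (c / 2 * h ^ 2 * ∫ x, u' x ^ 2) :=
        mul_le_mul_of_nonneg_left hmain (by positivity)
    _ = (c / 2) * ∫ x, u' x ^ 2 := by
        field_simp
end
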